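/- arXiv:1202.5101 — 3 statements merged into one kernel-verified Lean document; each statement's English description precedes it below -/
import Mathlib

section
/- Let $X$ be a random variable taking at most $K$ distinct real values. Then the distribution of $X$ is uniquely determined by its first $2K-1$ moments $\mathbb{E}X,\dots,\mathbb{E}X^{2K-1}$: if $Y$ also takes at most $K$ distinct values and $\mathbb{E}X^l=\mathbb{E}Y^l$ for $l=1,\dots,2K-1$, then $X$ and $Y$ have the same distribution. -/
/-!
On the finite set `T` of atoms of both laws, the indicator of any measurable set `A` agrees with
its Lagrange interpolation polynomial, of degree `< #T ≤ 2K`. Integrating, the mass of `A` is a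
linear combination of moments of order `≤ 2K - 1`, hence the same for both laws.
-/

open MeasureTheory Polynomial

lemma MeasureTheory.Integrable.of_ae_mem_finset {α E : Type*} [MeasurableSpace α]
    [NormedAddCommGroup E] {μ : Measure α} [IsFiniteMeasure μ] {f : α → E}
    (hf : AEStronglyMeasurable f μ) (T : Finset α) (hT : ∀ᵐ x ∂μ, x ∈ T) :
    Integrable f μ :=
  Integrable.of_bound hf (∑ t ∈ T, ‖f t‖) <| hT.mono fun _ hx ↦
    Finset.single_le_sum (fun t _ ↦ norm_nonneg (f t)) hx

lemma MeasureTheory.integral_eval_eq_sum_moments {μ : Measure ℝ} (p : ℝ[X])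
    (hint : ∀ i, Integrable (fun x : ℝ ↦ x ^ i) μ) :
    ∫ x, p.eval x ∂μ = p.sum fun i a ↦ a * ∫ x, x ^ i ∂μ := by
  simp only [eval_eq_sum, Polynomial.sum_def]
  rw [integral_finsetSum _ fun i _ ↦ (hint i).const_mul _]
  simp only [integral_const_mul]

lemma MeasureTheory.integral_eval_eq_of_moments_eq {μ ν : Measure ℝ} {n : ℕ} (p : ℝ[X])
    (hp : p.degree < n) (hμ : ∀ i, Integrable (fun x : ℝ ↦ x ^ i) μ)
    (hν : ∀ i, Integrable (fun x : ℝ ↦ x ^ i) ν)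
    (hmom : ∀ i < n, ∫ x, x ^ i ∂μ = ∫ x, x ^ i ∂ν) :
    ∫ x, p.eval x ∂μ = ∫ x, p.eval x ∂ν := by
  rw [integral_eval_eq_sum_moments p hμ, integral_eval_eq_sum_moments p hν]
  refine Finset.sum_congr rfl fun i hi ↦ ?_
  have hin : i < n := by
    by_contra! h
    exact mem_support_iff.mp hi (coeff_eq_zero_of_degree_lt (hp.trans_le (by exact_mod_cast h)))
  simp only [hmom i hin]

lemma MeasureTheory.measureReal_eq_integral_interpolate {μ : Measure ℝ} (T : Finset ℝ)
    (hT : ∀ᵐ x ∂μ, x ∈ T) {A : Set ℝ} (hA : MeasurableSet A) :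
    μ.real A = ∫ x, (Lagrange.interpolate T id (A.indicator 1)).eval x ∂μ := by
  rw [← integral_indicator_one hA]
  refine integral_congr_ae <| hT.mono fun x hx ↦ ?_
  exact (Lagrange.eval_interpolate_at_node (v := id) _ Function.injective_id.injOn hx).symm

theorem MeasureTheory.Measure.ext_of_moments_of_ae_mem_finset {μ ν : Measure ℝ}
    [IsFiniteMeasure μ] [IsFiniteMeasure ν] (T : Finset ℝ)
    (hμ : ∀ᵐ x ∂μ, x ∈ T) (hν : ∀ᵐ x ∂ν, x ∈ T)
    (hmom : ∀ i < T.card, ∫ x, x ^ i ∂μ = ∫ x, x ^ i ∂ν) :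
    μ = ν := by
  ext A hA
  rw [← measureReal_eq_measureReal_iff, measureReal_eq_integral_interpolate T hμ hA,
    measureReal_eq_integral_interpolate T hν hA]
  exact integral_eval_eq_of_moments_eq _
    (Lagrange.degree_interpolate_lt _ Function.injective_id.injOn)
    (fun i ↦ .of_ae_mem_finset (continuous_pow i).aestronglyMeasurable T hμ)
    (fun i ↦ .of_ae_mem_finset (continuous_pow i).aestronglyMeasurable T hν) hmom

theorem stmt10_general {Ω Ω' : Type*} [MeasurableSpace Ω] [MeasurableSpace Ω']
    (μ : Measure Ω) (ν : Measure Ω')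
    [IsProbabilityMeasure μ] [IsProbabilityMeasure ν]
    (X : Ω → ℝ) (Y : Ω' → ℝ) (hXm : Measurable X) (hYm : Measurable Y)
    (K : ℕ)
    (hX : ∃ S : Finset ℝ, S.card ≤ K ∧ ∀ ω, X ω ∈ S)
    (hY : ∃ S : Finset ℝ, S.card ≤ K ∧ ∀ ω, Y ω ∈ S)
    (hmom : ∀ l ∈ Finset.Icc 1 (2 * K - 1),
      ∫ ω, (X ω) ^ l ∂μ = ∫ ω, (Y ω) ^ l ∂ν) :
    Measure.map X μ = Measure.map Y ν := by
  obtain ⟨SX, hSXK, hSX⟩ := hX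
  obtain ⟨SY, hSYK, hSY⟩ := hY
  have hcard : (SX ∪ SY).card ≤ 2 * K := (Finset.card_union_le _ _).trans (by omega)
  refine Measure.ext_of_moments_of_ae_mem_finset (SX ∪ SY) ?_ ?_ fun i hi ↦ ?_
  · exact (ae_map_iff hXm.aemeasurable (Finset.measurableSet _)).2 <|
      .of_forall fun ω ↦ Finset.mem_union_left _ (hSX ω)
  · exact (ae_map_iff hYm.aemeasurable (Finset.measurableSet _)).2 <|
      .of_forall fun ω ↦ Finset.mem_union_right _ (hSY ω)
  rw [integral_map hXm.aemeasurable (continuous_pow i).aestronglyMeasurable,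
    integral_map hYm.aemeasurable (continuous_pow i).aestronglyMeasurable]
  rcases i with _ | i
  · simp
  · exact hmom _ (Finset.mem_Icc.2 ⟨by omega, by omega⟩)

/-- a random variable taking at most `K` distinct real values is
determined in distribution by its first `2K-1` moments. -/
theorem stmt10 {Ω Ω' : Type*} [MeasurableSpace Ω] [MeasurableSpace Ω']
    (μ : Measure Ω) (ν : Measure Ω')
    [IsProbabilityMeasure μ] [IsProbabilityMeasure ν]
    (X : Ω → ℝ) (Y : Ω' → ℝ) (hXm : Measurable X) (hYm : Measurable Y)
    (K : ℕ) (hK : 1 ≤ K)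
    (hX : ∃ S : Finset ℝ, S.card ≤ K ∧ ∀ ω, X ω ∈ S)
    (hY : ∃ S : Finset ℝ, S.card ≤ K ∧ ∀ ω, Y ω ∈ S)
    (hmom : ∀ l ∈ Finset.Icc 1 (2 * K - 1),
      ∫ ω, (X ω) ^ l ∂μ = ∫ ω, (Y ω) ^ l ∂ν) :
    Measure.map X μ = Measure.map Y ν :=
  stmt10_general μ ν X Y hXm hYm K hX hY hmom
end

section
/- Let $w:[0,1]^2\to[0,\infty)$ be symmetric measurable, and suppose $\mathbb{E}\,e^{s\,w^k(\xi_1,\xi_2)}<\infty$ for all $k\ge 1$ and all $|s|\le\varepsilon$ for some $\varepsilon>0$, where $\xi_1,\xi_2$ are i.i.d. uniform on $(0,1)$. Let $T_w f(u)=\int_0^1 w(u,v)f(v)\,dv$. Then for each $l\ge 1$ there exists $\varepsilon_l>0$ such that $\mathbb{E}\exp\{s\,(T_w^l 1)(\xi)\}<\infty$ for all $|s|\le\varepsilon_l$, with $\xi$ uniform on $(0,1)$. -/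
/-!
Fix `s = ε`. By induction on `l` we show `E exp(s (T_w^l 1)(ξ)^m) < ∞` for every `m ≥ 1`.
For `F ≥ 0`, Jensen's inequality for the convex increasing function `x ↦ exp(s x^m)` on `[0, ∞)`
gives `exp(s (T_w F)(u)^m) ≤ ∫ exp(s (w(u,v) F(v))^m) dv`, and `(ab)^m ≤ max(a^{2m}, b^{2m})`
bounds the integrand by `exp(s w(u,v)^{2m}) + exp(s F(v)^{2m})`. The first term is integrable
by (A'), the second by the induction hypothesis at the exponent `2m`.
-/

open MeasureTheory

noncomputable def unif : Measure ℝ := volume.restrict (Set.Icc 0 1)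

/-- The integral operator `T_w` with kernel `w`. -/
noncomputable def Tw (w : ℝ → ℝ → ℝ) (f : ℝ → ℝ) : ℝ → ℝ :=
  fun u => ∫ v, w u v * f v ∂unif

open Set Real

instance : IsProbabilityMeasure unif :=
  ⟨by simp [unif, Real.volume_Icc]⟩

lemma convexOn_exp_mul_pow {s : ℝ} (hs : 0 ≤ s) (m : ℕ) :
    ConvexOn ℝ (Ici 0) fun x : ℝ => exp (s * x ^ m) :=
  (convexOn_exp.subset (subset_univ _)
    (isPreconnected_Ici.image _ (by fun_prop)).ordConnected.convex).comp
    ((convexOn_pow m).smul hs) (Real.exp_monotone.monotoneOn _)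

lemma ofReal_exp_mul_integral_pow_le_lintegral {α : Type*} [MeasurableSpace α] {μ : Measure α}
    [IsProbabilityMeasure μ] {f : α → ℝ} (hf : AEMeasurable f μ) (hf0 : ∀ x, 0 ≤ f x)
    {s : ℝ} (hs : 0 ≤ s) (m : ℕ) :
    ENNReal.ofReal (exp (s * (∫ x, f x ∂μ) ^ m)) ≤
      ∫⁻ x, ENNReal.ofReal (exp (s * f x ^ m)) ∂μ := by
  by_cases hfi : Integrable f μ
  swap
  · calc ENNReal.ofReal (exp (s * (∫ x, f x ∂μ) ^ m))
        = ∫⁻ _, ENNReal.ofReal (exp (s * 0 ^ m)) ∂μ := by simp [integral_undef hfi]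
      _ ≤ ∫⁻ x, ENNReal.ofReal (exp (s * f x ^ m)) ∂μ := by
          gcongr with x
          exact hf0 x
  have hexp_meas : AEStronglyMeasurable (fun x => exp (s * f x ^ m)) μ := by
    fun_prop
  by_cases htop : ∫⁻ x, ENNReal.ofReal (exp (s * f x ^ m)) ∂μ = ⊤
  · simp [htop]
  have hexp_int : Integrable (fun x => exp (s * f x ^ m)) μ :=
    (lintegral_ofReal_ne_top_iff_integrable hexp_meas
      (ae_of_all _ fun _ => (exp_pos _).le)).1 htop
  have hjensen := (convexOn_exp_mul_pow hs m).map_integral_le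
    (by fun_prop) isClosed_Ici (ae_of_all _ hf0) hfi hexp_int
  rw [← ofReal_integral_eq_lintegral_ofReal hexp_int (ae_of_all _ fun _ => (exp_pos _).le)]
  exact ENNReal.ofReal_le_ofReal hjensen

lemma exp_mul_mul_pow_le {a b : ℝ} (ha : 0 ≤ a) (hb : 0 ≤ b) {s : ℝ} (hs : 0 ≤ s) (m : ℕ) :
    exp (s * (a * b) ^ m) ≤ exp (s * a ^ (2 * m)) + exp (s * b ^ (2 * m)) := by
  have hmax : (a * b) ^ m ≤ a ^ (2 * m) ∨ (a * b) ^ m ≤ b ^ (2 * m) := by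
    rw [pow_mul, pow_mul, sq, sq]
    rcases le_total a b with h | h
    · exact Or.inr (by gcongr)
    · exact Or.inl (by gcongr)
  rcases hmax with h | h
  · linarith [exp_le_exp.2 (mul_le_mul_of_nonneg_left h hs), exp_pos (s * b ^ (2 * m))]
  · linarith [exp_le_exp.2 (mul_le_mul_of_nonneg_left h hs), exp_pos (s * a ^ (2 * m))]

section Tw

variable {w : ℝ → ℝ → ℝ}

lemma measurable_Tw (hw : Measurable fun p : ℝ × ℝ => w p.1 p.2) {f : ℝ → ℝ}
    (hf : Measurable f) : Measurable (Tw w f) :=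
  (hw.mul (hf.comp measurable_snd)).stronglyMeasurable.integral_prod_right'.measurable

lemma Tw_nonneg (hw : ∀ u v, 0 ≤ w u v) {f : ℝ → ℝ} (hf : ∀ v, 0 ≤ f v) (u : ℝ) :
    0 ≤ Tw w f u :=
  integral_nonneg fun v => mul_nonneg (hw u v) (hf v)

lemma measurable_Tw_iterate (hw : Measurable fun p : ℝ × ℝ => w p.1 p.2) (l : ℕ) :
    Measurable ((Tw w)^[l] fun _ => 1) := by
  induction l with
  | zero => exact measurable_const
  | succ l ih => rw [Function.iterate_succ_apply']; exact measurable_Tw hw ih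

lemma Tw_iterate_nonneg (hw : ∀ u v, 0 ≤ w u v) (l : ℕ) (u : ℝ) :
    0 ≤ (Tw w)^[l] (fun _ => 1) u := by
  induction l generalizing u with
  | zero => exact zero_le_one
  | succ l ih => rw [Function.iterate_succ_apply']; exact Tw_nonneg hw ih u

lemma lintegral_exp_mul_Tw_pow_lt_top (hmeas : Measurable fun p : ℝ × ℝ => w p.1 p.2)
    (hnn : ∀ u v, 0 ≤ w u v) {s : ℝ} (hs : 0 ≤ s) {m : ℕ}
    (hw : ∫⁻ p, ENNReal.ofReal (exp (s * w p.1 p.2 ^ (2 * m))) ∂(unif.prod unif) < ⊤)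
    {f : ℝ → ℝ} (hf : Measurable f) (hf0 : ∀ v, 0 ≤ f v)
    (hfm : ∫⁻ v, ENNReal.ofReal (exp (s * f v ^ (2 * m))) ∂unif < ⊤) :
    ∫⁻ u, ENNReal.ofReal (exp (s * Tw w f u ^ m)) ∂unif < ⊤ := by
  set A : ℝ × ℝ → ENNReal := fun p => ENNReal.ofReal (exp (s * w p.1 p.2 ^ (2 * m)))
  set B : ℝ → ENNReal := fun v => ENNReal.ofReal (exp (s * f v ^ (2 * m)))
  have hA : Measurable A := by fun_prop
  have hB : Measurable B := by fun_prop
  calc ∫⁻ u, ENNReal.ofReal (exp (s * Tw w f u ^ m)) ∂unif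
      ≤ ∫⁻ u, ∫⁻ v, ENNReal.ofReal (exp (s * (w u v * f v) ^ m)) ∂unif ∂unif :=
        lintegral_mono fun u => ofReal_exp_mul_integral_pow_le_lintegral
          ((hmeas.comp measurable_prodMk_left).mul hf).aemeasurable
          (fun v => mul_nonneg (hnn u v) (hf0 v)) hs m
    _ ≤ ∫⁻ u, ∫⁻ v, (A (u, v) + B v) ∂unif ∂unif := by
        gcongr with u v
        rw [← ENNReal.ofReal_add (exp_pos _).le (exp_pos _).le]
        exact ENNReal.ofReal_le_ofReal (exp_mul_mul_pow_le (hnn u v) (hf0 v) hs m)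
    _ = ∫⁻ p, A p ∂(unif.prod unif) + ∫⁻ v, B v ∂unif := by
        simp_rw [lintegral_add_right _ hB]
        rw [lintegral_add_right _ measurable_const, lintegral_const, measure_univ, mul_one,
          lintegral_prod _ hA.aemeasurable]
    _ < ⊤ := ENNReal.add_lt_top.2 ⟨hw, hfm⟩

lemma lintegral_exp_mul_Tw_iterate_pow_lt_top (hmeas : Measurable fun p : ℝ × ℝ => w p.1 p.2)
    (hnn : ∀ u v, 0 ≤ w u v) {s : ℝ} (hs : 0 ≤ s)
    (hw : ∀ k : ℕ, 1 ≤ k →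
      ∫⁻ p, ENNReal.ofReal (exp (s * w p.1 p.2 ^ k)) ∂(unif.prod unif) < ⊤)
    (l : ℕ) {m : ℕ} (hm : 1 ≤ m) :
    ∫⁻ u, ENNReal.ofReal (exp (s * ((Tw w)^[l] (fun _ => 1) u) ^ m)) ∂unif < ⊤ := by
  induction l generalizing m with
  | zero => simp
  | succ l ih =>
    rw [Function.iterate_succ_apply']
    exact lintegral_exp_mul_Tw_pow_lt_top hmeas hnn hs (hw (2 * m) (by omega))
      (measurable_Tw_iterate hmeas l) (Tw_iterate_nonneg hnn l) (ih (by omega))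

end Tw

theorem stmt12_general (w : ℝ → ℝ → ℝ)
    (hmeas : Measurable fun p : ℝ × ℝ => w p.1 p.2)
    (hnn : ∀ u v, 0 ≤ w u v)
    (ε : ℝ) (hε : 0 < ε)
    (hA' : ∀ k : ℕ, 1 ≤ k → ∀ s : ℝ, |s| ≤ ε →
      Integrable (fun p : ℝ × ℝ => Real.exp (s * (w p.1 p.2) ^ k)) (unif.prod unif)) :
    ∀ l : ℕ, 1 ≤ l → ∃ εl > (0 : ℝ), ∀ s : ℝ, |s| ≤ εl →
      Integrable (fun u => Real.exp (s * (Tw w)^[l] (fun _ => 1) u)) unif := by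
  intro l _
  refine ⟨ε, hε, fun s hs => ?_⟩
  have hF_meas := measurable_Tw_iterate hmeas l
  have hfin := lintegral_exp_mul_Tw_iterate_pow_lt_top hmeas hnn hε.le
    (fun k hk => (hA' k hk ε (abs_of_pos hε).le).lintegral_lt_top) l le_rfl
  simp only [pow_one] at hfin
  have hint : Integrable (fun u => exp (ε * (Tw w)^[l] (fun _ => 1) u)) unif :=
    (lintegral_ofReal_ne_top_iff_integrable (by fun_prop)
      (ae_of_all _ fun _ => (exp_pos _).le)).1 hfin.ne
  refine hint.mono' (by fun_prop) (ae_of_all _ fun u => ?_)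
  rw [norm_of_nonneg (exp_pos _).le, exp_le_exp]
  exact mul_le_mul_of_nonneg_right ((le_abs_self s).trans hs) (Tw_iterate_nonneg hnn l u)

/-- condition (A') implies finiteness of exponential moments of the
iterates `T_w^l 1`: if `E exp(s wᵏ(ξ₁,ξ₂)) < ∞` for all `k ≥ 1` and `|s| ≤ ε`,
then for each `l ≥ 1` there is `ε_l > 0` with `E exp(s (T_w^l 1)(ξ)) < ∞` for
`|s| ≤ ε_l`. -/
theorem stmt12 (w : ℝ → ℝ → ℝ)
    (hmeas : Measurable fun p : ℝ × ℝ => w p.1 p.2)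
    (hsym : ∀ u v, w u v = w v u)
    (hnn : ∀ u v, 0 ≤ w u v)
    (ε : ℝ) (hε : 0 < ε)
    (hA' : ∀ k : ℕ, 1 ≤ k → ∀ s : ℝ, |s| ≤ ε →
      Integrable (fun p : ℝ × ℝ => Real.exp (s * (w p.1 p.2) ^ k)) (unif.prod unif)) :
    ∀ l : ℕ, 1 ≤ l → ∃ εl > (0 : ℝ), ∀ s : ℝ, |s| ≤ εl →
      Integrable (fun u => Real.exp (s * (Tw w)^[l] (fun _ => 1) u)) unif :=
  stmt12_general w hmeas hnn ε hε hA'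
end

section
/- Let $(U_n,V_n)$ be random elements such that $U_n\Rightarrow U$ in distribution and the conditional distribution of $V_n$ given $U_n$ converges in probability to a fixed distribution $\mathcal{L}(V)$ (i.e., $\mathbb{E}[f(V_n)\mid U_n]\to\mathbb{E}f(V)$ in probability for every bounded continuous $f$). Then $(U_n,V_n)\Rightarrow (U,V)$ with $U$ and $V$ independent; in particular $V_n\Rightarrow V$. -/
/-!
Since `f(Uₙ)` is `σ(Uₙ)`-measurable, `E[f(Uₙ) h(Vₙ)] = E[f(Uₙ) E[h(Vₙ) ∣ Uₙ]]`, and the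
conditional expectation is bounded and converges in probability, hence in `L¹`, to the constant
`∫ h dμV`; so `E[f(Uₙ) h(Vₙ)] → ∫ f dμU ∫ h dμV`. Taking `f = 1` gives `Vₙ ⇒ μV`, so both
marginals, hence the joint laws of `(Uₙ, Vₙ)`, are tight. By Prokhorov's theorem it then suffices
to test against the point-separating algebra spanned by the functions `f(x) h(y)`, on which the
limit is `μU ⊗ μV`.
-/

open MeasureTheory Filter Set
open scoped BoundedContinuousFunction Topology NNReal

namespace BoundedContinuousFunction

variable {X Y : Type*} [TopologicalSpace X] [TopologicalSpace Y]

variable (X Y) in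
def prodMulSubmonoid : Submonoid ((X × Y) →ᵇ ℝ) where
  carrier := {G | ∃ (f : X →ᵇ ℝ) (g : Y →ᵇ ℝ), ∀ p, G p = f p.1 * g p.2}
  mul_mem' := by
    rintro _ _ ⟨f₁, g₁, h₁⟩ ⟨f₂, g₂, h₂⟩
    exact ⟨f₁ * f₂, g₁ * g₂, fun p => by simp only [coe_mul, Pi.mul_apply, h₁, h₂]; ring⟩
  one_mem' := ⟨1, 1, fun p => by simp⟩

lemma mem_span_prodMulSubmonoid_of_mem_adjoin {G : (X × Y) →ᵇ ℝ}
    (hG : G ∈ StarAlgebra.adjoin ℝ (prodMulSubmonoid X Y : Set ((X × Y) →ᵇ ℝ))) :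
    G ∈ Submodule.span ℝ (prodMulSubmonoid X Y : Set ((X × Y) →ᵇ ℝ)) := by
  have hstar : star (prodMulSubmonoid X Y : Set ((X × Y) →ᵇ ℝ)) = prodMulSubmonoid X Y := by
    ext G
    have : star G = G := by ext p; simp
    simp [Set.mem_star, this]
  have hspan := StarAlgebra.adjoin_eq_span (R := ℝ) (prodMulSubmonoid X Y : Set ((X × Y) →ᵇ ℝ))
  rw [hstar, Set.union_self, Submonoid.closure_eq] at hspan
  rwa [← hspan]

lemma exists_apply_ne_of_ne {Z : Type*} [TopologicalSpace Z] [T35Space Z] {x y : Z}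
    (hxy : x ≠ y) : ∃ f : Z →ᵇ ℝ, f x ≠ f y := by
  obtain ⟨f, hf, hx, hy⟩ := CompletelyRegularSpace.completely_regular x {y} isClosed_singleton hxy
  refine ⟨(mkOfCompact ⟨((↑) : unitInterval → ℝ), continuous_subtype_val⟩).compContinuous
    ⟨f, hf⟩, ?_⟩
  simp [hx, hy (mem_singleton y)]

lemma separatesPoints_adjoin_prodMulSubmonoid [T35Space X] [T35Space Y] :
    ((StarAlgebra.adjoin ℝ (prodMulSubmonoid X Y : Set ((X × Y) →ᵇ ℝ))).map
      (toContinuousMapStarₐ ℝ)).SeparatesPoints := by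
  intro p q hpq
  obtain ⟨f, g, hfg⟩ : ∃ (f : X →ᵇ ℝ) (g : Y →ᵇ ℝ), f p.1 * g p.2 ≠ f q.1 * g q.2 := by
    rcases not_and_or.1 (mt Prod.ext_iff.2 hpq) with h | h
    · obtain ⟨f, hf⟩ := exists_apply_ne_of_ne h
      exact ⟨f, 1, by simpa using hf⟩
    · obtain ⟨g, hg⟩ := exists_apply_ne_of_ne h
      exact ⟨1, g, by simpa using hg⟩
  set G := f.compContinuous ContinuousMap.fst * g.compContinuous ContinuousMap.snd
  have hGM : G ∈ prodMulSubmonoid X Y := ⟨f, g, fun _ => rfl⟩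
  exact ⟨G, ⟨toContinuousMapStarₐ ℝ G,
    StarSubalgebra.mem_map.2 ⟨G, StarAlgebra.subset_adjoin ℝ _ hGM, rfl⟩, rfl⟩, hfg⟩

end BoundedContinuousFunction

open BoundedContinuousFunction

namespace MeasureTheory

lemma ProbabilityMeasure.isTightMeasureSet_of_tendsto {E : Type*} [TopologicalSpace E]
    [PolishSpace E] [MeasurableSpace E] [BorelSpace E]
    {μ : ℕ → ProbabilityMeasure E} {μ₀ : ProbabilityMeasure E} (h : Tendsto μ atTop (𝓝 μ₀)) :
    IsTightMeasureSet {(μ n : Measure E) | n} := by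
  let := TopologicalSpace.upgradeIsCompletelyMetrizable E
  have hcomp : IsCompact (closure (range μ)) :=
    h.isCompact_insert_range.closure_of_subset (subset_insert _ _)
  simpa using isTightMeasureSet_of_isCompact_closure hcomp

lemma ProbabilityMeasure.tendsto_of_isTightMeasureSet_of_tendsto_integral_mul
    {X Y : Type*} [TopologicalSpace X] [PolishSpace X] [MeasurableSpace X] [BorelSpace X]
    [TopologicalSpace Y] [PolishSpace Y] [MeasurableSpace Y] [BorelSpace Y]
    {ι : Type*} {l : Filter ι} {ν : ι → ProbabilityMeasure (X × Y)}
    {ν₀ : ProbabilityMeasure (X × Y)} (htight : IsTightMeasureSet {(ν i : Measure (X × Y)) | i})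
    (hν : ∀ (f : X →ᵇ ℝ) (g : Y →ᵇ ℝ),
      Tendsto (fun i => ∫ p : X × Y, f p.1 * g p.2 ∂(ν i)) l
        (𝓝 (∫ p : X × Y, f p.1 * g p.2 ∂ν₀))) :
    Tendsto ν l (𝓝 ν₀) := by
  refine ProbabilityMeasure.tendsto_of_tight_of_separatesPoints ℝ htight
    separatesPoints_adjoin_prodMulSubmonoid fun G hG => ?_
  have hspan := mem_span_prodMulSubmonoid_of_mem_adjoin hG
  clear hG
  induction hspan using Submodule.span_induction with
  | mem G hG =>
    obtain ⟨f, g, hfg⟩ := hG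
    simpa only [hfg] using hν f g
  | zero => simpa using tendsto_const_nhds
  | add G₁ G₂ _ _ h₁ h₂ =>
    simp_rw [coe_add, Pi.add_apply, integral_add (G₁.integrable _) (G₂.integrable _)]
    exact h₁.add h₂
  | smul c G _ h =>
    simp only [coe_smul, integral_smul]
    exact h.const_smul c

section Law

variable {Ω E : Type*} [MeasurableSpace Ω] [MeasurableSpace E]

noncomputable def law (P : Measure Ω) [IsProbabilityMeasure P] {X : Ω → E} (hX : Measurable X) :
    ProbabilityMeasure E :=
  ⟨P.map X, Measure.isProbabilityMeasure_map hX.aemeasurable⟩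

@[simp]
lemma toMeasure_law (P : Measure Ω) [IsProbabilityMeasure P] {X : Ω → E} (hX : Measurable X) :
    (law P hX : Measure E) = P.map X := rfl

lemma integral_law [TopologicalSpace E] [OpensMeasurableSpace E] (P : Measure Ω)
    [IsProbabilityMeasure P] {X : Ω → E} (hX : Measurable X) {g : E → ℝ} (hg : Continuous g) :
    ∫ x, g x ∂(law P hX) = ∫ ω, g (X ω) ∂P :=
  integral_map hX.aemeasurable hg.aestronglyMeasurable

end Law

lemma tendsto_law_iff {E : Type*} [MeasurableSpace E] [TopologicalSpace E]
    [OpensMeasurableSpace E] {ι : Type*} {l : Filter ι} {Ω : ι → Type*}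
    [∀ i, MeasurableSpace (Ω i)] {P : ∀ i, Measure (Ω i)}
    [∀ i, IsProbabilityMeasure (P i)] {X : ∀ i, Ω i → E} (hX : ∀ i, Measurable (X i))
    {μ : ProbabilityMeasure E} :
    Tendsto (fun i => law (P i) (hX i)) l (𝓝 μ) ↔
      ∀ f : E →ᵇ ℝ, Tendsto (fun i => ∫ ω, f (X i ω) ∂P i) l (𝓝 (∫ x, f x ∂μ)) := by
  simp only [ProbabilityMeasure.tendsto_iff_forall_integral_tendsto,
    integral_law _ _ (BoundedContinuousFunction.continuous _)]

lemma isTightMeasureSet_law_prodMk {S S' : Type*}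
    [TopologicalSpace S] [PolishSpace S] [MeasurableSpace S] [BorelSpace S]
    [TopologicalSpace S'] [PolishSpace S'] [MeasurableSpace S'] [BorelSpace S']
    {Ω : ℕ → Type*} [∀ n, MeasurableSpace (Ω n)]
    {P : ∀ n, Measure (Ω n)} [∀ n, IsProbabilityMeasure (P n)]
    {U : ∀ n, Ω n → S} {V : ∀ n, Ω n → S'} (hU : ∀ n, Measurable (U n))
    (hV : ∀ n, Measurable (V n)) {μU : ProbabilityMeasure S} {μV : ProbabilityMeasure S'}
    (hUlaw : Tendsto (fun n => law (P n) (hU n)) atTop (𝓝 μU))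
    (hVlaw : Tendsto (fun n => law (P n) (hV n)) atTop (𝓝 μV)) :
    IsTightMeasureSet {(law (P n) ((hU n).prodMk (hV n)) : Measure (S × S')) | n} := by
  refine .prodMk ((ProbabilityMeasure.isTightMeasureSet_of_tendsto hUlaw).subset ?_)
    ((ProbabilityMeasure.isTightMeasureSet_of_tendsto hVlaw).subset ?_)
  · rintro _ ⟨_, ⟨n, rfl⟩, rfl⟩
    exact ⟨n, by simp [Measure.fst_map_prodMk (hV n)]⟩
  · rintro _ ⟨_, ⟨n, rfl⟩, rfl⟩
    exact ⟨n, by simp [Measure.snd_map_prodMk (hU n)]⟩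

lemma integral_abs_le_add_mul_measureReal {Ω : Type*} [MeasurableSpace Ω] {μ : Measure Ω}
    [IsProbabilityMeasure μ] {X : Ω → ℝ} (hX : Measurable X) {C ε : ℝ} (hε : 0 ≤ ε)
    (hC : ∀ᵐ ω ∂μ, |X ω| ≤ C) :
    ∫ ω, |X ω| ∂μ ≤ ε + C * μ.real {ω | ε ≤ |X ω|} := by
  have hs : MeasurableSet {ω | ε ≤ |X ω|} := measurableSet_le measurable_const hX.abs
  have hbound : ∀ᵐ ω ∂μ, |X ω| ≤ ε + {ω | ε ≤ |X ω|}.indicator (fun _ => C) ω := by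
    filter_upwards [hC] with ω hω
    by_cases hωs : ε ≤ |X ω|
    · rw [indicator_of_mem (show ω ∈ {ω | ε ≤ |X ω|} from hωs)]; linarith
    · rw [indicator_of_notMem (show ω ∉ {ω | ε ≤ |X ω|} from hωs)]; linarith
  calc ∫ ω, |X ω| ∂μ ≤ ∫ ω, (ε + {ω | ε ≤ |X ω|}.indicator (fun _ => C) ω) ∂μ :=
        integral_mono_ae (Integrable.of_bound hX.abs.aestronglyMeasurable C (by simpa using hC))
          ((integrable_const ε).add ((integrable_const C).indicator hs)) hbound
    _ = ε + C * μ.real {ω | ε ≤ |X ω|} := by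
        rw [integral_add (integrable_const ε) ((integrable_const C).indicator hs),
          integral_indicator_const C hs]
        simp [mul_comm]

section SequenceOfProbabilitySpaces

variable {ι : Type*} {l : Filter ι} {Ω : ι → Type*} {mΩ : ∀ i, MeasurableSpace (Ω i)}
  {P : ∀ i, Measure (Ω i)} [∀ i, IsProbabilityMeasure (P i)]

lemma tendsto_integral_abs_of_tendsto_measure {X : ∀ i, Ω i → ℝ} (hX : ∀ i, Measurable (X i))
    {C : ℝ} (hC : ∀ i, ∀ᵐ ω ∂P i, |X i ω| ≤ C)
    (hXP : ∀ ε > 0, Tendsto (fun i => P i {ω | ε ≤ |X i ω|}) l (𝓝 0)) :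
    Tendsto (fun i => ∫ ω, |X i ω| ∂P i) l (𝓝 0) := by
  refine tendsto_order.2 ⟨fun a ha => .of_forall fun i => ha.trans_le
    (integral_nonneg fun _ => abs_nonneg _), fun a ha => ?_⟩
  have hbound : Tendsto (fun i => a / 2 + C * (P i).real {ω | a / 2 ≤ |X i ω|}) l
      (𝓝 (a / 2 + C * 0)) :=
    (((ENNReal.tendsto_toReal ENNReal.zero_ne_top).comp (hXP _ (half_pos ha))).const_mul
      C).const_add _
  filter_upwards [hbound.eventually_lt_const (by linarith : a / 2 + C * 0 < a)] with i hi
  exact (integral_abs_le_add_mul_measureReal (hX i) (half_pos ha).le (hC i)).trans_lt hi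

lemma abs_integral_mul_sub_le_integral_abs_condExp_sub {Ω : Type*} {m mΩ : MeasurableSpace Ω}
    (hm : m ≤ mΩ) {μ : Measure Ω} [IsFiniteMeasure μ] {Y Z : Ω → ℝ} {D : ℝ}
    (hZ : StronglyMeasurable[m] Z) (hZD : ∀ ω, |Z ω| ≤ D) (hY : Integrable Y μ) (c : ℝ) :
    |∫ ω, Z ω * Y ω ∂μ - c * ∫ ω, Z ω ∂μ| ≤ D * ∫ ω, |μ[Y | m] ω - c| ∂μ := by
  have hZm : AEStronglyMeasurable Z μ := (hZ.mono hm).aestronglyMeasurable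
  have hZD' : ∀ᵐ ω ∂μ, ‖Z ω‖ ≤ D := .of_forall hZD
  have hZY : Integrable (fun ω => Z ω * Y ω) μ := hY.bdd_mul hZm hZD'
  have hZE : Integrable (fun ω => Z ω * μ[Y | m] ω) μ := integrable_condExp.bdd_mul hZm hZD'
  have hZc : Integrable (fun ω => c * Z ω) μ := (Integrable.of_bound hZm D hZD').const_mul c
  have pull_out : ∫ ω, Z ω * Y ω ∂μ = ∫ ω, Z ω * μ[Y | m] ω ∂μ := by
    rw [← integral_condExp hm]
    exact integral_congr_ae (condExp_mul_of_stronglyMeasurable_left hZ hZY hY)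
  calc |∫ ω, Z ω * Y ω ∂μ - c * ∫ ω, Z ω ∂μ|
      = |∫ ω, Z ω * (μ[Y | m] ω - c) ∂μ| := by
        rw [pull_out, ← integral_const_mul, ← integral_sub hZE hZc]
        simp_rw [mul_sub, mul_comm c]
    _ ≤ ∫ ω, |Z ω * (μ[Y | m] ω - c)| ∂μ := abs_integral_le_integral_abs
    _ ≤ ∫ ω, D * |μ[Y | m] ω - c| ∂μ := by
        refine integral_mono
          ((integrable_condExp.sub (integrable_const c)).bdd_mul hZm hZD').abs
          ((integrable_condExp.sub (integrable_const c)).abs.const_mul D) fun ω => ?_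
        rw [abs_mul]
        exact mul_le_mul_of_nonneg_right (hZD ω) (abs_nonneg _)
    _ = D * ∫ ω, |μ[Y | m] ω - c| ∂μ := integral_const_mul D _

lemma tendsto_integral_mul_of_tendsto_condExp {m : ∀ i, MeasurableSpace (Ω i)}
    (hm : ∀ i, m i ≤ mΩ i) {Y Z : ∀ i, Ω i → ℝ} {a c C D : ℝ}
    (hZ : ∀ i, StronglyMeasurable[m i] (Z i)) (hZD : ∀ i ω, |Z i ω| ≤ D)
    (hZa : Tendsto (fun i => ∫ ω, Z i ω ∂P i) l (𝓝 a))
    (hY : ∀ i, Integrable (Y i) (P i)) (hYC : ∀ i, ∀ᵐ ω ∂P i, |Y i ω| ≤ C)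
    (hYc : ∀ ε > 0, Tendsto (fun i => P i {ω | ε ≤ |(P i)[Y i | m i] ω - c|}) l (𝓝 0)) :
    Tendsto (fun i => ∫ ω, Z i ω * Y i ω ∂P i) l (𝓝 (a * c)) := by
  have hmeas : ∀ i, Measurable[mΩ i] fun ω => (P i)[Y i | m i] ω - c := fun i =>
    (stronglyMeasurable_condExp.mono (hm i)).measurable.sub_const c
  have hbdd : ∀ i, ∀ᵐ ω ∂P i, |(P i)[Y i | m i] ω - c| ≤ C + |c| := fun i => by
    filter_upwards [ae_bdd_abs_condExp_of_ae_bdd_abs (m := m i) (hYC i)] with ω hω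
    exact (abs_sub _ _).trans (add_le_add_left hω _)
  have hL1 : Tendsto (fun i => ∫ ω, |(P i)[Y i | m i] ω - c| ∂P i) l (𝓝 0) :=
    tendsto_integral_abs_of_tendsto_measure hmeas hbdd hYc
  have hdiff : Tendsto (fun i => ∫ ω, Z i ω * Y i ω ∂P i - c * ∫ ω, Z i ω ∂P i) l (𝓝 0) :=
    squeeze_zero_norm (fun i => abs_integral_mul_sub_le_integral_abs_condExp_sub (hm i) (hZ i)
      (hZD i) (hY i) c) (by simpa using hL1.const_mul D)
  simpa [mul_comm c] using hdiff.add (hZa.const_mul c)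

end SequenceOfProbabilitySpaces

end MeasureTheory

/-- Lemma on asymptotic independence: if `U_n ⇒ U` in distribution
and the conditional law of `V_n` given `U_n` converges in probability to a fixed
law `L(V)` (in the sense that `E[f(V_n)∣U_n] → E f(V)` in probability for every
bounded continuous `f`), then `(U_n, V_n) ⇒ (U, V)` with `U, V` independent;
in particular `V_n ⇒ V`. -/
theorem stmt15 {S S' : Type*}
    [TopologicalSpace S] [PolishSpace S] [MeasurableSpace S] [BorelSpace S]
    [TopologicalSpace S'] [PolishSpace S'] [MeasurableSpace S'] [BorelSpace S']
    {Ω : ℕ → Type*} [∀ n, MeasurableSpace (Ω n)]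
    (P : ∀ n, Measure (Ω n)) [∀ n, IsProbabilityMeasure (P n)]
    (U : ∀ n, Ω n → S) (V : ∀ n, Ω n → S')
    (hU : ∀ n, Measurable (U n)) (hV : ∀ n, Measurable (V n))
    (μU : Measure S) (μV : Measure S')
    [IsProbabilityMeasure μU] [IsProbabilityMeasure μV]
    (hUconv : ∀ f : S →ᵇ ℝ,
      Tendsto (fun n => ∫ ω, f (U n ω) ∂P n) atTop (nhds (∫ x, f x ∂μU)))
    (hVcond : ∀ f : S' →ᵇ ℝ, ∀ ε > (0 : ℝ),
      Tendsto (fun n =>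
          P n {ω | ε ≤
            |((P n)[(fun ω => f (V n ω)) |
                MeasurableSpace.comap (U n) inferInstance]) ω - ∫ y, f y ∂μV|})
        atTop (nhds 0)) :
    ∀ g : (S × S') →ᵇ ℝ,
      Tendsto (fun n => ∫ ω, g (U n ω, V n ω) ∂P n) atTop
        (nhds (∫ p, g p ∂(μU.prod μV))) := by
  have hprod (f : S →ᵇ ℝ) (h : S' →ᵇ ℝ) : Tendsto (fun n => ∫ ω, f (U n ω) * h (V n ω) ∂P n)
      atTop (𝓝 ((∫ x, f x ∂μU) * ∫ y, h y ∂μV)) :=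
    tendsto_integral_mul_of_tendsto_condExp (fun n => (hU n).comap_le)
      (fun n => (f.continuous.measurable.comp (comap_measurable (U n))).stronglyMeasurable)
      (fun n ω => by simpa using f.norm_coe_le_norm (U n ω)) (hUconv f)
      (fun n => .of_bound (h.continuous.measurable.comp (hV n)).aestronglyMeasurable ‖h‖
        (.of_forall fun ω => h.norm_coe_le_norm (V n ω)))
      (fun n => .of_forall fun ω => by simpa using h.norm_coe_le_norm (V n ω)) (hVcond h)
  have hUlaw : Tendsto (fun n => law (P n) (hU n)) atTop (𝓝 ⟨μU, inferInstance⟩) :=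
    (tendsto_law_iff hU).2 hUconv
  have hVlaw : Tendsto (fun n => law (P n) (hV n)) atTop (𝓝 ⟨μV, inferInstance⟩) :=
    (tendsto_law_iff hV).2 fun h => by simpa using hprod 1 h
  have hjoint : Tendsto (fun n => law (P n) ((hU n).prodMk (hV n))) atTop
      (𝓝 ⟨μU.prod μV, inferInstance⟩) :=
    ProbabilityMeasure.tendsto_of_isTightMeasureSet_of_tendsto_integral_mul
      (isTightMeasureSet_law_prodMk hU hV hUlaw hVlaw) fun f h => by
        have hfh : Continuous fun p : S × S' => f p.1 * h p.2 := by fun_prop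
        simpa only [integral_law _ _ hfh, ProbabilityMeasure.coe_mk, integral_prod_mul]
          using hprod f h
  exact (tendsto_law_iff _).1 hjoint
end
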